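/- arXiv:1409.1024 — 2 statements merged into one kernel-verified Lean document; each statement's English description precedes it below -/
import Mathlib

section
/- Let k_s∈C¹((0,∞);(0,∞)) with ∫_t^∞ k_s(u)du→0 and k_s(t)→0 as t→∞, and let Γ∈C¹ be increasing with Γ(t)→∞. Then there exists a function k∈C¹((0,∞);(0,∞)) (constructed by adding smooth spikes of height Γ₊(t)−k_s(t) on intervals [n,n+w_n) of widths w_n = min(1/2, ∫_{n+1}^{n+2}k_s(u)du / Γ₊(n+1)), where Γ₊(t)=Γ(t)+sup k_s+1) such that lim_{t→∞} (∫_t^∞ k(u)du)/(∫_t^∞ k_s(u)du) = 1 and limsup_{t→∞} k(t)/Γ(t) = 1. -/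
open Real Filter MeasureTheory Set Topology

/-!
Choose `a ≥ 0` with `Γ ≥ 1` on `[a, ∞)` and put `k = k_s + Γ Φ`, where `Φ = ∑ φ_n` is a sum of
smooth bumps of height `1` centred at `a + n + 1/2` and supported in `(a + n, a + n + 1)`.
At the centres `k / Γ ≥ 1`, while `k / Γ ≤ k_s + 1` beyond `a`, so `limsup k / Γ = 1`.
The `n`-th bump is taken so narrow that `∫ Γ φ_n ≤ 2⁻ⁿ ∫_{a+n+1}^∞ k_s`; its contribution to
`∫_t^∞ k` therefore vanishes for `t ≥ a + n + 1` and is at most `2⁻ⁿ ∫_t^∞ k_s` otherwise, and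
Tannery's theorem shows that the spikes' share of the tail integral tends to `0`.
-/

theorem limsup_eq_of_frequently_le_of_forall_eventually_le {α : Type*} {l : Filter α}
    {u : α → ℝ} {c : ℝ} (hfreq : ∃ᶠ x in l, c ≤ u x)
    (hev : ∀ ε > 0, ∀ᶠ x in l, u x ≤ c + ε) : limsup u l = c := by
  have hbdd : IsBoundedUnder (· ≤ ·) l u := isBoundedUnder_of_eventually_le (hev 1 one_pos)
  refine le_antisymm (le_of_forall_pos_le_add fun ε hε => ?_)
    (le_limsup_of_frequently_le hfreq hbdd)
  exact limsup_le_of_le (IsCoboundedUnder.of_frequently_ge hfreq) (hev ε hε)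

theorem tendsto_tsum_div_of_abs_le {α : Type*} {l : Filter α} {u : ℕ → α → ℝ} {T : α → ℝ}
    {b : ℕ → ℝ} (hb : Summable b) (hu : ∀ n, ∀ᶠ t in l, u n t = 0)
    (hT : ∀ᶠ t in l, 0 < T t) (hle : ∀ᶠ t in l, ∀ n, |u n t| ≤ b n * T t) :
    Tendsto (fun t => (∑' n, u n t) / T t) l (𝓝 0) := by
  simp_rw [← tsum_div_const]
  simpa using tendsto_tsum_of_dominated_convergence (g := fun _ => (0 : ℝ)) hb
    (fun n => tendsto_const_nhds.congr' <| (hu n).mono fun t ht => by simp [ht])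
    (by
      filter_upwards [hT, hle] with t hTt hlet n
      rw [Real.norm_eq_abs, abs_div, abs_of_pos hTt, div_le_iff₀ hTt]
      exact hlet n)

theorem integrable_tsum_of_summable_integral_norm {α ι E : Type*} [MeasurableSpace α]
    {μ : Measure α} [Countable ι] [NormedAddCommGroup E] {F : ι → α → E}
    (hF_int : ∀ i, Integrable (F i) μ) (hF_sum : Summable fun i => ∫ a, ‖F i a‖ ∂μ)
    (hmeas : AEStronglyMeasurable (fun a => ∑' i, F i a) μ) :
    Integrable (fun a => ∑' i, F i a) μ := by
  refine ⟨hmeas, ?_⟩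
  calc ∫⁻ a, ‖∑' i, F i a‖ₑ ∂μ ≤ ∫⁻ a, ∑' i, ‖F i a‖ₑ ∂μ :=
        lintegral_mono fun a => enorm_tsum_le_tsum_enorm
    _ = ∑' i, ENNReal.ofReal (∫ a, ‖F i a‖ ∂μ) := by
        rw [lintegral_tsum fun i => (hF_int i).1.enorm]
        exact tsum_congr fun i => (ofReal_integral_norm_eq_lintegral_enorm (hF_int i)).symm
    _ = ENNReal.ofReal (∑' i, ∫ a, ‖F i a‖ ∂μ) :=
        (ENNReal.ofReal_tsum_of_nonneg (fun i => integral_nonneg fun a => norm_nonneg _)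
          hF_sum).symm
    _ < ⊤ := ENNReal.ofReal_lt_top

theorem antitoneOn_setIntegral_Ioi {f : ℝ → ℝ} {c : ℝ} (hf : IntegrableOn f (Ioi c))
    (hf_nonneg : ∀ x > c, 0 ≤ f x) : AntitoneOn (fun t => ∫ x in Ioi t, f x) (Ici c) :=
  fun _ hs _ _ hst => setIntegral_mono_set (hf.mono_set (Ioi_subset_Ioi hs))
    ((ae_restrict_iff' measurableSet_Ioi).mpr
      (ae_of_all _ fun x hx => hf_nonneg x (lt_of_le_of_lt hs hx)))
    (Ioi_subset_Ioi hst).eventuallyLE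

theorem setIntegral_Ioi_pos {f : ℝ → ℝ} {t : ℝ} (hf : IntegrableOn f (Ioi t))
    (hpos : ∀ x > t, 0 < f x) : 0 < ∫ x in Ioi t, f x := by
  rw [setIntegral_pos_iff_support_of_nonneg_ae
    ((ae_restrict_iff' measurableSet_Ioi).mpr (ae_of_all _ fun x hx => (hpos x hx).le)) hf]
  have : Ioi t ⊆ Function.support f ∩ Ioi t := fun x hx => ⟨(hpos x hx).ne', hx⟩
  exact (measure_mono this).trans_lt' (by simp)

theorem ContDiffBump.integral_le {c : ℝ} (f : ContDiffBump c) : ∫ x, f x ≤ 2 * f.rOut := by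
  rw [← setIntegral_eq_integral_of_forall_compl_eq_zero fun x hx =>
    Function.notMem_support.mp (f.support_eq ▸ hx)]
  calc ∫ x in Metric.ball c f.rOut, f x
      ≤ ‖∫ x in Metric.ball c f.rOut, f x‖ := le_norm_self _
    _ ≤ 1 * volume.real (Metric.ball c f.rOut) :=
        norm_setIntegral_le_of_norm_le_const measure_ball_lt_top fun x _ => by
          rw [Real.norm_of_nonneg f.nonneg]; exact f.le_one
    _ = 2 * f.rOut := by rw [Real.volume_real_ball f.rOut_pos.le, one_mul]

theorem ContDiffBump.setIntegral_mul_le {c : ℝ} (f : ContDiffBump c) {g : ℝ → ℝ}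
    (hg : Continuous g) {M : ℝ} (hM : 0 ≤ M) (hgM : ∀ x ∈ Metric.ball c f.rOut, g x ≤ M)
    (s : Set ℝ) : ∫ x in s, g x * f x ≤ 2 * f.rOut * M := by
  have hint : Integrable (fun x => g x * f x) :=
    (hg.mul f.continuous).integrable_of_hasCompactSupport f.hasCompactSupport.mul_left
  have hle : ∀ x, g x * f x ≤ M * f x := fun x => by
    by_cases hx : x ∈ Metric.ball c f.rOut
    · exact mul_le_mul_of_nonneg_right (hgM x hx) f.nonneg
    · have hfx : f x = 0 := Function.notMem_support.mp (f.support_eq ▸ hx)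
      rw [hfx, mul_zero, mul_zero]
  calc ∫ x in s, g x * f x ≤ ∫ x in s, M * f x :=
        setIntegral_mono hint.integrableOn (f.integrable.const_mul M).integrableOn hle
    _ = M * ∫ x in s, f x := integral_const_mul M _
    _ ≤ M * ∫ x, f x := mul_le_mul_of_nonneg_left
        (setIntegral_le_integral f.integrable (ae_of_all _ fun _ => f.nonneg)) hM
    _ ≤ 2 * f.rOut * M := by rw [mul_comm _ M]; exact mul_le_mul_of_nonneg_left f.integral_le hM

theorem exists_bumps_mass_le {a : ℝ} {g : ℝ → ℝ} (hg : ∀ n : ℕ, 0 < g (a + n + 1)) {ε : ℕ → ℝ}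
    (hε : ∀ n, 0 < ε n) : ∃ φ : ∀ n : ℕ, ContDiffBump (a + n + 1 / 2),
      ∀ n, (φ n).rOut ≤ 1 / 2 ∧ 2 * (φ n).rOut * g (a + n + 1) ≤ ε n := by
  have hr : ∀ n, 0 < min (1 / 2) (ε n / (2 * g (a + n + 1))) := fun n =>
    lt_min one_half_pos (div_pos (hε n) (mul_pos two_pos (hg n)))
  refine ⟨fun n => ⟨_ / 2, _, half_pos (hr n), half_lt_self (hr n)⟩,
    fun n => ⟨min_le_left _ _, ?_⟩⟩
  have := (le_div_iff₀ (mul_pos two_pos (hg n))).mp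
    (min_le_right (1 / 2) (ε n / (2 * g (a + n + 1))))
  dsimp only
  linarith

section BumpSum

variable {a : ℝ} (φ : ∀ n : ℕ, ContDiffBump (a + n + 1 / 2))

noncomputable def bumpSum (x : ℝ) : ℝ := ∑' n, φ n x

theorem bump_eq_zero_of_notMem (hφ : ∀ n, (φ n).rOut ≤ 1 / 2) {n : ℕ} {x : ℝ}
    (hx : x ∉ Ioo (a + n) (a + n + 1)) : φ n x = 0 := by
  refine (φ n).zero_of_le_dist ((hφ n).trans ?_)
  rw [Real.dist_eq, le_abs]
  by_cases h : a + n < x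
  · left; linarith [not_lt.mp fun h' => hx ⟨h, h'⟩]
  · right; linarith

theorem bumpSum_eq_sum_range (hφ : ∀ n, (φ n).rOut ≤ 1 / 2) {M : ℕ} {x : ℝ}
    (hx : x < a + M) : bumpSum φ x = ∑ n ∈ Finset.range M, φ n x := by
  refine tsum_eq_sum fun n hn => bump_eq_zero_of_notMem φ hφ fun hxn => hn ?_
  have : (n : ℝ) < M := by linarith [hxn.1]
  exact Finset.mem_range.mpr (by exact_mod_cast this)

theorem contDiff_bumpSum (hφ : ∀ n, (φ n).rOut ≤ 1 / 2) {k : ℕ∞} :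
    ContDiff ℝ k (bumpSum φ) := by
  refine contDiff_iff_contDiffAt.mpr fun x => ?_
  obtain ⟨M, hM⟩ := exists_nat_gt (x - a)
  have hsum : bumpSum φ =ᶠ[𝓝 x] fun y => ∑ n ∈ Finset.range M, φ n y :=
    eventually_of_mem (Iio_mem_nhds (by linarith : x < a + M)) fun y hy =>
      bumpSum_eq_sum_range φ hφ hy
  exact (ContDiff.sum fun n _ => (φ n).contDiff).contDiffAt.congr_of_eventuallyEq hsum

theorem bumpSum_eq_of_mem_Icc (hφ : ∀ n, (φ n).rOut ≤ 1 / 2) {n : ℕ} {x : ℝ}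
    (hx : x ∈ Icc (a + n) (a + n + 1)) : bumpSum φ x = φ n x := by
  refine tsum_eq_single n fun m hm => bump_eq_zero_of_notMem φ hφ fun hxm => ?_
  rcases lt_or_gt_of_ne hm with h | h
  · have : (m : ℝ) + 1 ≤ n := by exact_mod_cast h
    linarith [hxm.2, hx.1]
  · have : (n : ℝ) + 1 ≤ m := by exact_mod_cast h
    linarith [hxm.1, hx.2]

theorem bumpSum_eq_zero_of_forall_notMem (hφ : ∀ n, (φ n).rOut ≤ 1 / 2) {x : ℝ}
    (hx : ∀ n : ℕ, x ∉ Ioo (a + n) (a + n + 1)) : bumpSum φ x = 0 := by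
  simp [bumpSum, bump_eq_zero_of_notMem φ hφ (hx _)]

theorem bumpSum_nonneg (x : ℝ) : 0 ≤ bumpSum φ x := tsum_nonneg fun n => (φ n).nonneg

theorem bumpSum_le_one (hφ : ∀ n, (φ n).rOut ≤ 1 / 2) (x : ℝ) : bumpSum φ x ≤ 1 := by
  by_cases h : ∃ n : ℕ, x ∈ Icc (a + n) (a + n + 1)
  · obtain ⟨n, hn⟩ := h
    rw [bumpSum_eq_of_mem_Icc φ hφ hn]
    exact (φ n).le_one
  · push Not at h
    rw [bumpSum_eq_zero_of_forall_notMem φ hφ fun n hn => h n (Ioo_subset_Icc_self hn)]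
    exact zero_le_one

theorem bumpSum_center (hφ : ∀ n, (φ n).rOut ≤ 1 / 2) (n : ℕ) :
    bumpSum φ (a + n + 1 / 2) = 1 := by
  rw [bumpSum_eq_of_mem_Icc φ hφ (n := n) ⟨by linarith, by linarith⟩]
  exact (φ n).one_of_mem_closedBall (Metric.mem_closedBall_self (φ n).rIn_pos.le)

variable {g : ℝ → ℝ}

theorem mul_bump_nonneg (hφ : ∀ n, (φ n).rOut ≤ 1 / 2) (hg_nonneg : ∀ x > a, 0 ≤ g x)
    (n : ℕ) (x : ℝ) : 0 ≤ g x * φ n x := by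
  by_cases hx : x ∈ Ioo (a + n) (a + n + 1)
  · exact mul_nonneg (hg_nonneg x (by linarith [hx.1, (n.cast_nonneg : (0 : ℝ) ≤ n)])) (φ n).nonneg
  · rw [bump_eq_zero_of_notMem φ hφ hx, mul_zero]

theorem mul_bumpSum_nonneg (hφ : ∀ n, (φ n).rOut ≤ 1 / 2) (hg_nonneg : ∀ x > a, 0 ≤ g x)
    (x : ℝ) : 0 ≤ g x * bumpSum φ x := by
  by_cases hx : a < x
  · exact mul_nonneg (hg_nonneg x hx) (bumpSum_nonneg φ x)
  · rw [bumpSum_eq_zero_of_forall_notMem φ hφ fun n hn => hx (by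
      linarith [hn.1, (n.cast_nonneg : (0 : ℝ) ≤ n)]), mul_zero]

theorem setIntegral_Ioi_mul_bump_eq_zero (hφ : ∀ n, (φ n).rOut ≤ 1 / 2) {n : ℕ} {t : ℝ}
    (ht : a + n + 1 ≤ t) : ∫ x in Ioi t, g x * φ n x = 0 :=
  setIntegral_eq_zero_of_forall_eq_zero fun x hx => by
    rw [bump_eq_zero_of_notMem φ hφ fun hxn => lt_asymm (hxn.2.trans_le ht) hx, mul_zero]

theorem setIntegral_mul_bump_le (hφ : ∀ n, (φ n).rOut ≤ 1 / 2) (hg : Continuous g)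
    (hg_mono : Monotone g) (hg_nonneg : ∀ x > a, 0 ≤ g x) (n : ℕ) (s : Set ℝ) :
    ∫ x in s, g x * φ n x ≤ 2 * (φ n).rOut * g (a + n + 1) := by
  refine (φ n).setIntegral_mul_le hg (hg_nonneg _ (by linarith [(n.cast_nonneg : (0 : ℝ) ≤ n)]))
    (fun x hx => hg_mono ?_) s
  by_contra h
  exact (φ n).support_eq.symm.subset hx (bump_eq_zero_of_notMem φ hφ fun hxn => h hxn.2.le)

theorem integrable_mul_bump (hg : Continuous g) (n : ℕ) : Integrable fun x => g x * φ n x :=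
  (hg.mul (φ n).continuous).integrable_of_hasCompactSupport (φ n).hasCompactSupport.mul_left

theorem summable_setIntegral_norm_mul_bump (hφ : ∀ n, (φ n).rOut ≤ 1 / 2) (hg : Continuous g)
    (hg_mono : Monotone g) (hg_nonneg : ∀ x > a, 0 ≤ g x)
    (hsum : Summable fun n => 2 * (φ n).rOut * g (a + n + 1)) (s : Set ℝ) :
    Summable fun n => ∫ x in s, ‖g x * φ n x‖ := by
  simp_rw [Real.norm_of_nonneg (mul_bump_nonneg φ hφ hg_nonneg _ _)]
  exact hsum.of_nonneg_of_le
    (fun n => integral_nonneg fun x => mul_bump_nonneg φ hφ hg_nonneg n x)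
    (fun n => setIntegral_mul_bump_le φ hφ hg hg_mono hg_nonneg n s)

theorem hasSum_setIntegral_mul_bump (hφ : ∀ n, (φ n).rOut ≤ 1 / 2) (hg : Continuous g)
    (hg_mono : Monotone g) (hg_nonneg : ∀ x > a, 0 ≤ g x)
    (hsum : Summable fun n => 2 * (φ n).rOut * g (a + n + 1)) (s : Set ℝ) :
    HasSum (fun n => ∫ x in s, g x * φ n x) (∫ x in s, g x * bumpSum φ x) := by
  simpa only [bumpSum, tsum_mul_left] using hasSum_integral_of_summable_integral_norm
    (fun n => (integrable_mul_bump φ hg n).integrableOn)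
    (summable_setIntegral_norm_mul_bump φ hφ hg hg_mono hg_nonneg hsum s)

theorem integrableOn_mul_bumpSum (hφ : ∀ n, (φ n).rOut ≤ 1 / 2) (hg : Continuous g)
    (hg_mono : Monotone g) (hg_nonneg : ∀ x > a, 0 ≤ g x)
    (hsum : Summable fun n => 2 * (φ n).rOut * g (a + n + 1)) (s : Set ℝ) :
    IntegrableOn (fun x => g x * bumpSum φ x) s := by
  have hcont : Continuous fun x => g x * bumpSum φ x :=
    hg.mul (contDiff_bumpSum φ hφ (k := 0)).continuous
  simp only [bumpSum, ← tsum_mul_left] at hcont ⊢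
  exact integrable_tsum_of_summable_integral_norm
    (fun n => (integrable_mul_bump φ hg n).integrableOn)
    (summable_setIntegral_norm_mul_bump φ hφ hg hg_mono hg_nonneg hsum s)
    hcont.aestronglyMeasurable

theorem summable_mass_of_le (hg_nonneg : ∀ x > a, 0 ≤ g x) {T : ℝ → ℝ} {b : ℕ → ℝ}
    (hb : Summable b) (hb_nonneg : ∀ n, 0 ≤ b n) (hT_anti : AntitoneOn T (Ici a))
    (hmass : ∀ n : ℕ, 2 * (φ n).rOut * g (a + n + 1) ≤ b n * T (a + n + 1)) :
    Summable fun n => 2 * (φ n).rOut * g (a + n + 1) := by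
  have ha : ∀ n : ℕ, a ≤ a + n + 1 := fun n => by linarith [(n.cast_nonneg : (0 : ℝ) ≤ n)]
  refine (hb.mul_right (T a)).of_nonneg_of_le
    (fun n => mul_nonneg (by linarith [(φ n).rOut_pos]) (hg_nonneg _ (by linarith [ha n])))
    fun n => (hmass n).trans ?_
  exact mul_le_mul_of_nonneg_left (hT_anti (mem_Ici.2 le_rfl) (ha n) (ha n)) (hb_nonneg n)

theorem tendsto_setIntegral_Ioi_mul_bumpSum_div (hφ : ∀ n, (φ n).rOut ≤ 1 / 2)
    (hg : Continuous g) (hg_mono : Monotone g) (hg_nonneg : ∀ x > a, 0 ≤ g x)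
    {T : ℝ → ℝ} {b : ℕ → ℝ} (hb : Summable b) (hb_nonneg : ∀ n, 0 ≤ b n)
    (hT_pos : ∀ t ≥ a, 0 < T t) (hT_anti : AntitoneOn T (Ici a))
    (hmass : ∀ n : ℕ, 2 * (φ n).rOut * g (a + n + 1) ≤ b n * T (a + n + 1)) :
    Tendsto (fun t => (∫ x in Ioi t, g x * bumpSum φ x) / T t) atTop (𝓝 0) := by
  have ha : ∀ n : ℕ, a ≤ a + n + 1 := fun n => by linarith [(n.cast_nonneg : (0 : ℝ) ≤ n)]
  have hsum := summable_mass_of_le φ hg_nonneg hb hb_nonneg hT_anti hmass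
  refine (tendsto_tsum_div_of_abs_le (u := fun n t => ∫ x in Ioi t, g x * φ n x) (T := T) hb
    (fun n => ?_) ?_ ?_).congr fun t => ?_
  · filter_upwards [eventually_ge_atTop (a + n + 1)] with t ht
    exact setIntegral_Ioi_mul_bump_eq_zero φ hφ ht
  · filter_upwards [eventually_ge_atTop a] with t ht using hT_pos t ht
  · filter_upwards [eventually_ge_atTop a] with t ht n
    rw [abs_of_nonneg (integral_nonneg fun x => mul_bump_nonneg φ hφ hg_nonneg n x)]
    rcases le_or_gt (a + n + 1) t with h | h
    · rw [setIntegral_Ioi_mul_bump_eq_zero φ hφ h]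
      exact mul_nonneg (hb_nonneg n) (hT_pos t ht).le
    · calc ∫ x in Ioi t, g x * φ n x ≤ 2 * (φ n).rOut * g (a + n + 1) :=
            setIntegral_mul_bump_le φ hφ hg hg_mono hg_nonneg n _
        _ ≤ b n * T (a + n + 1) := hmass n
        _ ≤ b n * T t := mul_le_mul_of_nonneg_left (hT_anti ht (ha n) h.le) (hb_nonneg n)
  · rw [(hasSum_setIntegral_mul_bump φ hφ hg hg_mono hg_nonneg hsum _).tsum_eq]

theorem limsup_add_mul_bumpSum_div_eq_one (hφ : ∀ n, (φ n).rOut ≤ 1 / 2) {f : ℝ → ℝ}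
    (hf : Tendsto f atTop (𝓝 0)) (hf_nonneg : ∀ᶠ t in atTop, 0 ≤ f t)
    (hg : ∀ x ≥ a, 1 ≤ g x) :
    limsup (fun t => (f t + g t * bumpSum φ t) / g t) atTop = 1 := by
  have hdiv : ∀ t ≥ a, (f t + g t * bumpSum φ t) / g t = f t / g t + bumpSum φ t := by
    intro t ht
    have : g t ≠ 0 := by linarith [hg t ht]
    field_simp
  have hcenter : Tendsto (fun n : ℕ => a + n + 1 / 2) atTop atTop :=
    tendsto_atTop_add_const_right _ _ (tendsto_atTop_add_const_left _ _ tendsto_natCast_atTop_atTop)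
  refine limsup_eq_of_frequently_le_of_forall_eventually_le ?_ fun ε hε => ?_
  · refine hcenter.frequently (Eventually.frequently ?_)
    filter_upwards [hcenter.eventually hf_nonneg, hcenter.eventually (eventually_ge_atTop a)]
      with n hfn hn
    rw [hdiv _ hn, bumpSum_center φ hφ]
    linarith [div_nonneg hfn (zero_le_one.trans (hg _ hn))]
  · filter_upwards [hf.eventually (gt_mem_nhds hε), hf_nonneg, eventually_ge_atTop a]
      with t hft hf0 ht
    rw [hdiv t ht]
    linarith [div_le_self hf0 (hg t ht), bumpSum_le_one φ hφ t]

end BumpSum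

theorem tendsto_setIntegral_Ioi_add_div {f h : ℝ → ℝ} {c : ℝ} (hf : IntegrableOn f (Ioi c))
    (hh : IntegrableOn h (Ioi c)) (hf_ne : ∀ᶠ t in atTop, ∫ x in Ioi t, f x ≠ 0)
    (hlim : Tendsto (fun t => (∫ x in Ioi t, h x) / ∫ x in Ioi t, f x) atTop (𝓝 0)) :
    Tendsto (fun t => (∫ x in Ioi t, f x + h x) / ∫ x in Ioi t, f x) atTop (𝓝 1) := by
  refine (add_zero (1 : ℝ) ▸ hlim.const_add 1).congr' ?_
  filter_upwards [hf_ne, eventually_ge_atTop c] with t hne ht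
  rw [integral_add (hf.mono_set (Ioi_subset_Ioi ht)) (hh.mono_set (Ioi_subset_Ioi ht)),
    add_div, div_self hne]

theorem stmt17_general (ks Γ : ℝ → ℝ)
    (hks_pos : ∀ t > 0, 0 < ks t) (hksC1 : ContDiffOn ℝ 1 ks (Ioi 0))
    (hks_int : IntegrableOn ks (Ioi 0))
    (hks_0 : Tendsto ks atTop (𝓝 0))
    (hΓC1 : ContDiff ℝ 1 Γ) (hΓmono : Monotone Γ)
    (hGamma_top : Tendsto Γ atTop atTop) :
    ∃ k : ℝ → ℝ, (∀ t > 0, 0 < k t) ∧ ContDiffOn ℝ 1 k (Ioi 0) ∧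
      IntegrableOn k (Ioi 0) ∧
      Tendsto (fun t => (∫ u in Ioi t, k u) / (∫ u in Ioi t, ks u)) atTop (𝓝 1) ∧
      limsup (fun t => k t / Γ t) atTop = 1 := by
  obtain ⟨a, ha⟩ := ((hGamma_top.eventually_ge_atTop 1).and
    (eventually_ge_atTop 0)).exists_forall_of_atTop
  have hΓ : ∀ x ≥ a, 1 ≤ Γ x := fun x hx => (ha x hx).1
  have hΓ_nonneg : ∀ x > a, 0 ≤ Γ x := fun x hx => zero_le_one.trans (hΓ x hx.le)
  have hks_int' : IntegrableOn ks (Ioi a) := hks_int.mono_set (Ioi_subset_Ioi (ha a le_rfl).2)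
  have hks_pos' : ∀ x > a, 0 < ks x := fun x hx => hks_pos x ((ha a le_rfl).2.trans_lt hx)
  have hT_pos : ∀ t ≥ a, 0 < ∫ u in Ioi t, ks u := fun t ht =>
    setIntegral_Ioi_pos (hks_int'.mono_set (Ioi_subset_Ioi ht)) fun x hx =>
      hks_pos' x (ht.trans_lt hx)
  obtain ⟨φ, hφ⟩ := exists_bumps_mass_le (fun n : ℕ => one_pos.trans_le (hΓ _ (by
      linarith [(n.cast_nonneg : (0 : ℝ) ≤ n)])))
    (ε := fun n => (1 / 2) ^ n * ∫ u in Ioi (a + n + 1), ks u) fun n =>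
      mul_pos (by positivity) (hT_pos _ (by linarith [(n.cast_nonneg : (0 : ℝ) ≤ n)]))
  have hφ_half : ∀ n, (φ n).rOut ≤ 1 / 2 := fun n => (hφ n).1
  have hmass := fun n => (hφ n).2
  have hT_anti := antitoneOn_setIntegral_Ioi hks_int' fun x hx => (hks_pos' x hx).le
  have hΓ_cont := hΓC1.continuous
  have hspike_int : IntegrableOn (fun x => Γ x * bumpSum φ x) (Ioi 0) :=
    integrableOn_mul_bumpSum φ hφ_half hΓ_cont hΓmono hΓ_nonneg (summable_mass_of_le φ
      hΓ_nonneg summable_geometric_two (fun n => by positivity) hT_anti hmass) _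
  refine ⟨fun x => ks x + Γ x * bumpSum φ x,
    fun t ht => add_pos_of_pos_of_nonneg (hks_pos t ht) (mul_bumpSum_nonneg φ hφ_half hΓ_nonneg t),
    hksC1.add (hΓC1.mul (contDiff_bumpSum φ hφ_half)).contDiffOn,
    hks_int.add hspike_int,
    tendsto_setIntegral_Ioi_add_div hks_int hspike_int ?_ ?_,
    limsup_add_mul_bumpSum_div_eq_one φ hφ_half hks_0 ?_ hΓ⟩
  · filter_upwards [eventually_ge_atTop a] with t ht using (hT_pos t ht).ne'
  · exact tendsto_setIntegral_Ioi_mul_bumpSum_div φ hφ_half hΓ_cont hΓmono hΓ_nonneg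
      summable_geometric_two (fun n => by positivity) hT_pos hT_anti hmass
  · filter_upwards [eventually_gt_atTop 0] with t ht using (hks_pos t ht).le

/-- Spike lemma: given positive `C¹` integrable `k_s` with vanishing
tails, `k_s(t) → 0`, and an increasing `C¹` function `Γ → ∞`, there is a positive `C¹`
function `k` whose tail integrals are asymptotic to those of `k_s`, while
`limsup k/Γ = 1`. -/
theorem stmt17 (ks Γ : ℝ → ℝ)
    (hks_pos : ∀ t > 0, 0 < ks t) (hksC1 : ContDiffOn ℝ 1 ks (Ioi 0))
    (hks_int : IntegrableOn ks (Ioi 0))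
    (hks_tail : Tendsto (fun t => ∫ u in Ioi t, ks u) atTop (𝓝 0))
    (hks_0 : Tendsto ks atTop (𝓝 0))
    (hΓC1 : ContDiff ℝ 1 Γ) (hΓmono : Monotone Γ)
    (hGamma_top : Tendsto Γ atTop atTop) :
    ∃ k : ℝ → ℝ, (∀ t > 0, 0 < k t) ∧ ContDiffOn ℝ 1 k (Ioi 0) ∧
      IntegrableOn k (Ioi 0) ∧
      Tendsto (fun t => (∫ u in Ioi t, k u) / (∫ u in Ioi t, ks u)) atTop (𝓝 1) ∧
      limsup (fun t => k t / Γ t) atTop = 1 :=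
  stmt17_general ks Γ hks_pos hksC1 hks_int hks_0 hΓC1 hΓmono hGamma_top
end

section
/- Let z be a C¹ function on [T,∞) with z(t)→0 as t→∞, satisfying z'(t)=-f(z(t)+γ(t)) where f is continuous and asymptotic at 0 to an increasing odd C¹ function φ∈RV₀(β) (β>1), γ is continuous, and suppose there exist M∈(0,∞) and T₀ such that |z(t)|>(M/2)F⁻¹(t) for all t≥T₀ and γ(t)/F⁻¹(t)→0 as t→∞. Then lim_{t→∞}|z(t)|/F⁻¹(t)=1; in particular, liminf_{t→∞}|z(t)|/F⁻¹(t) can only equal 0 or 1. -/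
/-!
Put `G x = ∫ u in x..c, 1 / f u` for a small `c > 0`, so that `G (F⁻¹ t) = t - const`. By the
chain rule `(G ∘ |z|)' = sign z · f (z + γ) / f |z|`, which tends to `1`: `f ~ φ` at `0`, `φ` is
odd, and `φ (|z| + sign z · γ) ~ φ |z|` by regular variation since `γ = o(z)`. Hence
`G |z(t)| ~ t ~ G (F⁻¹ t)`.

To invert this asymptotic equality we use that `G` loses a fixed fraction of its value whenever
its argument is multiplied by a fixed factor `1 + d`: near `0` we have `f ≍ φ` and
`φ (2y) ≥ ρ φ y` with `ρ > 2`, so summing over dyadic intervals gives `G x ≲ x / φ x`, while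
`∫ u in x..(1+d)x, 1 / f u ≳ x / φ x`. Therefore `|z(t)| / F⁻¹(t) → 1`.
-/

open Real Filter MeasureTheory Set Topology Asymptotics

theorem isEquivalent_id_of_hasDerivAt {Ψ q : ℝ → ℝ} (hΨ : ∀ᶠ t in atTop, HasDerivAt Ψ (q t) t)
    (hq : Tendsto q atTop (𝓝 1)) : Ψ ~[atTop] id := by
  refine IsLittleO.of_bound fun ε hε => ?_
  obtain ⟨T, hT⟩ := eventually_atTop.1
    (hΨ.and (hq.eventually (Metric.closedBall_mem_nhds 1 (half_pos hε))))
  have hmv : ∀ t ≥ T, |(Ψ t - t) - (Ψ T - T)| ≤ ε / 2 * (t - T) := fun t ht =>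
    norm_image_sub_le_of_norm_deriv_le_segment' (f := fun t => Ψ t - t)
      (fun x hx => ((hT x hx.1).1.sub (hasDerivAt_id x)).hasDerivWithinAt)
      (fun x hx => by simpa [Real.dist_eq] using (hT x hx.1).2) t ⟨ht, le_rfl⟩
  filter_upwards [eventually_ge_atTop T, eventually_ge_atTop (2 / ε * |Ψ T - T| - T),
    eventually_ge_atTop 0] with t hTt hbig hpos
  have hK : |Ψ T - T| - ε / 2 * T ≤ ε / 2 * t := calc
    _ = ε / 2 * (2 / ε * |Ψ T - T| - T) := by field_simp
    _ ≤ ε / 2 * t := by gcongr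
  simp only [Pi.sub_apply, id, Real.norm_eq_abs, abs_of_nonneg hpos]
  linarith [hmv t hTt, abs_sub_abs_le_abs_sub (Ψ t - t) (Ψ T - T)]

section Filter

variable {α : Type*} {L : Filter α}

theorem tendsto_div_of_mul_le_abs {γ z F : α → ℝ} {m : ℝ} (hm : 0 < m)
    (hF : ∀ᶠ t in L, 0 < F t) (hzF : ∀ᶠ t in L, m * F t ≤ |z t|)
    (hγ : Tendsto (fun t => γ t / F t) L (𝓝 0)) : Tendsto (fun t => γ t / z t) L (𝓝 0) := by
  refine (((isLittleO_iff_tendsto' (hF.mono fun t h h0 => absurd h0 h.ne')).2 hγ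
    ).trans_isBigO (IsBigO.of_bound m⁻¹ ?_)).tendsto_div_nhds_zero
  filter_upwards [hF, hzF] with t hFt hzt
  rw [Real.norm_eq_abs, Real.norm_eq_abs, abs_of_pos hFt, inv_mul_eq_div, le_div_iff₀ hm]
  linarith

theorem eventually_le_one_add_mul_of_tendsto_div_comp {G : ℝ → ℝ} {a b : α → ℝ} {c d κ : ℝ}
    (hc : 0 < c) (hd : 0 < d) (hG : AntitoneOn G (Ioo 0 c)) (hκ : 0 < κ)
    (hdec : ∀ᶠ x in 𝓝[>] 0, κ * G x ≤ G x - G ((1 + d) * x))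
    (ha : Tendsto a L (𝓝[>] 0)) (hb : Tendsto b L (𝓝[>] 0)) (hGb : ∀ᶠ t in L, 0 < G (b t))
    (hab : Tendsto (fun t => G (a t) / G (b t)) L (𝓝 1)) :
    ∀ᶠ t in L, a t ≤ (1 + d) * b t := by
  filter_upwards [ha.eventually (Ioo_mem_nhdsGT hc),
    hb.eventually (Ioo_mem_nhdsGT (div_pos hc (by linarith : (0 : ℝ) < 1 + d))),
    hb.eventually hdec, hGb, hab.eventually (lt_mem_nhds (sub_lt_self 1 hκ))]
    with t hat ⟨hbt, hbtc⟩ hdect hGbt hrat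
  by_contra! hlt
  have hdb : (1 + d) * b t ∈ Ioo 0 c := ⟨by positivity, (lt_div_iff₀' (by linarith)).1 hbtc⟩
  have := hG hdb hat hlt.le
  rw [lt_div_iff₀ hGbt] at hrat
  linarith

theorem tendsto_div_of_isEquivalent_comp {G : ℝ → ℝ} {a b : α → ℝ} {c : ℝ}
    (hc : 0 < c) (hG : AntitoneOn G (Ioo 0 c))
    (hdec : ∀ d > 0, ∃ κ > 0, ∀ᶠ x in 𝓝[>] 0, κ * G x ≤ G x - G ((1 + d) * x))
    (ha : Tendsto a L (𝓝[>] 0)) (hb : Tendsto b L (𝓝[>] 0)) (hGb : ∀ᶠ t in L, 0 < G (b t))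
    (hab : (fun t => G (a t)) ~[L] fun t => G (b t)) :
    Tendsto (fun t => a t / b t) L (𝓝 1) := by
  have hab' := (isEquivalent_iff_tendsto_one (hGb.mono fun _ h => h.ne')).1 hab
  have hGa : ∀ᶠ t in L, 0 < G (a t) := by
    filter_upwards [hGb, hab'.eventually (lt_mem_nhds one_pos)] with t hbt habt
    exact (div_pos_iff_of_pos_right hbt).1 habt
  have hba := (isEquivalent_iff_tendsto_one (hGa.mono fun _ h => h.ne')).1 hab.symm
  have hle : ∀ d > 0, (∀ᶠ t in L, a t ≤ (1 + d) * b t) ∧ ∀ᶠ t in L, b t ≤ (1 + d) * a t := by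
    intro d hd
    obtain ⟨κ, hκ, hdec⟩ := hdec d hd
    exact ⟨eventually_le_one_add_mul_of_tendsto_div_comp hc hd hG hκ hdec ha hb hGb hab',
      eventually_le_one_add_mul_of_tendsto_div_comp hc hd hG hκ hdec hb ha hGa hba⟩
  refine tendsto_order.2 ⟨fun u hu => ?_, fun v hv => ?_⟩
  · filter_upwards [(hle ((1 - u) / 2) (by linarith)).2, ha.eventually eventually_mem_nhdsWithin,
      hb.eventually eventually_mem_nhdsWithin] with t hbat (hat : 0 < a t) (hbt : 0 < b t)
    have hd : 0 < 1 + (1 - u) / 2 := by linarith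
    have : (1 - (1 - u) / 2) * b t ≤ a t := le_of_mul_le_mul_left (by
      nlinarith [mul_nonneg (sq_nonneg ((1 - u) / 2)) hbt.le]) hd
    rw [lt_div_iff₀ hbt]
    nlinarith
  · filter_upwards [(hle ((v - 1) / 2) (by linarith)).1,
      hb.eventually eventually_mem_nhdsWithin] with t habt (hbt : 0 < b t)
    rw [div_lt_iff₀ hbt]
    nlinarith

end Filter

section RegularVariation

variable {φ : ℝ → ℝ} {β : ℝ}

theorem exists_two_lt_doubling (hβ : 1 < β) (hφpos : ∀ y, 0 < y → 0 < φ y)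
    (hrv : Tendsto (fun y => φ (2 * y) / φ y) (𝓝[>] 0) (𝓝 (2 ^ β))) :
    ∃ ρ > 2, ∀ᶠ y in 𝓝[>] 0, ρ * φ y ≤ φ (2 * y) := by
  have h2β : (2 : ℝ) < 2 ^ β := by simpa using rpow_lt_rpow_of_exponent_lt one_lt_two hβ
  obtain ⟨ρ, h2ρ, hρβ⟩ := exists_between h2β
  refine ⟨ρ, h2ρ, ?_⟩
  filter_upwards [hrv.eventually (lt_mem_nhds hρβ), self_mem_nhdsWithin] with y hy (hy0 : 0 < y)
  exact ((lt_div_iff₀ (hφpos y hy0)).1 hy).le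

theorem eventually_le_two_mul_of_tendsto_div {f : ℝ → ℝ} (hφpos : ∀ y, 0 < y → 0 < φ y)
    (hasym : Tendsto (fun y => f y / φ y) (𝓝[≠] 0) (𝓝 1)) :
    ∀ᶠ y in 𝓝[>] 0, φ y ≤ 2 * f y ∧ f y ≤ 2 * φ y := by
  filter_upwards [(hasym.mono_left (nhdsWithin_mono _ fun _ h => ne_of_gt h)).eventually
    (Ioo_mem_nhds (by norm_num : (1 : ℝ) / 2 < 1) one_lt_two), self_mem_nhdsWithin]
    with y hy (hy0 : 0 < y)
  rw [lt_div_iff₀ (hφpos y hy0), div_lt_iff₀ (hφpos y hy0)] at hy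
  constructor <;> linarith [hy.1, hy.2]

theorem tendsto_apply_div_apply_of_regularlyVarying {α : Type*} {L : Filter α}
    (hφpos : ∀ y, 0 < y → 0 < φ y) (hφmono : MonotoneOn φ (Ioi 0))
    (hrv : ∀ l : ℝ, 0 < l → Tendsto (fun y => φ (l * y) / φ y) (𝓝[>] 0) (𝓝 (l ^ β)))
    {a w : α → ℝ} (ha : Tendsto a L (𝓝[>] 0)) (hw : Tendsto (fun t => w t / a t) L (𝓝 1)) :
    Tendsto (fun t => φ (w t) / φ (a t)) L (𝓝 1) := by
  have hpow : Tendsto (fun l : ℝ => l ^ β) (𝓝 1) (𝓝 1) := by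
    simpa using (continuousAt_rpow_const 1 β (Or.inl one_ne_zero)).tendsto
  refine tendsto_order.2 ⟨fun u hu => ?_, fun v hv => ?_⟩
  · obtain ⟨l, hlu, hl⟩ := (((hpow.mono_left nhdsWithin_le_nhds).eventually
      (lt_mem_nhds hu)).and (Ioo_mem_nhdsLT zero_lt_one)).exists
    filter_upwards [ha.eventually eventually_mem_nhdsWithin, hw.eventually (lt_mem_nhds hl.2),
      ((hrv l hl.1).comp ha).eventually (lt_mem_nhds hlu)] with t (hat : 0 < a t) hwt hrat
    rw [lt_div_iff₀ hat] at hwt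
    have hla : 0 < l * a t := mul_pos hl.1 hat
    calc u < φ (l * a t) / φ (a t) := hrat
      _ ≤ φ (w t) / φ (a t) :=
        (div_le_div_iff_of_pos_right (hφpos _ hat)).2 (hφmono hla (hla.trans hwt) hwt.le)
  · obtain ⟨l, hlv, hl⟩ := (((hpow.mono_left nhdsWithin_le_nhds).eventually
      (gt_mem_nhds hv)).and (Ioo_mem_nhdsGT one_lt_two)).exists
    filter_upwards [ha.eventually eventually_mem_nhdsWithin, hw.eventually (gt_mem_nhds hl.1),
      hw.eventually (lt_mem_nhds one_pos),
      ((hrv l (by linarith [hl.1])).comp ha).eventually (gt_mem_nhds hlv)]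
      with t (hat : 0 < a t) hwt hwat hrat
    rw [div_lt_iff₀ hat] at hwt
    have hwpos : 0 < w t := (div_pos_iff_of_pos_right hat).1 hwat
    calc φ (w t) / φ (a t) ≤ φ (l * a t) / φ (a t) :=
        (div_le_div_iff_of_pos_right (hφpos _ hat)).2 (hφmono hwpos (hwpos.trans hwt) hwt.le)
      _ < v := hrat

theorem apply_sign_mul (hφodd : ∀ y, φ (-y) = -φ y) {x : ℝ} (hx : x ≠ 0) (y : ℝ) :
    φ (SignType.sign x * y) = SignType.sign x * φ y := by
  rcases hx.lt_or_gt with h | h <;> simp [h, hφodd]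

theorem tendsto_sign_mul_div_of_asymptotic {α : Type*} {L : Filter α} {f : ℝ → ℝ}
    (hφodd : ∀ y, φ (-y) = -φ y) (hφpos : ∀ y, 0 < y → 0 < φ y) (hφmono : MonotoneOn φ (Ioi 0))
    (hrv : ∀ l : ℝ, 0 < l → Tendsto (fun y => φ (l * y) / φ y) (𝓝[>] 0) (𝓝 (l ^ β)))
    (hasym : Tendsto (fun y => f y / φ y) (𝓝[≠] 0) (𝓝 1)) {z γ : α → ℝ}
    (hz : Tendsto (fun t => |z t|) L (𝓝[>] 0)) (hγ : Tendsto (fun t => γ t / z t) L (𝓝 0)) :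
    Tendsto (fun t => SignType.sign (z t) * f (z t + γ t) / f |z t|) L (𝓝 1) := by
  have hφne : ∀ y, y ≠ 0 → φ y ≠ 0 := fun y hy h => (hφpos _ (abs_pos.2 hy)).ne' (by
    rw [← sign_mul_self, apply_sign_mul hφodd hy, h, mul_zero])
  have hzne : ∀ᶠ t in L, z t ≠ 0 :=
    (hz.eventually eventually_mem_nhdsWithin).mono fun t ht => abs_pos.1 ht
  have habs : Tendsto (fun t => |z t|) L (𝓝[≠] 0) :=
    hz.mono_right (nhdsWithin_mono _ fun _ h => ne_of_gt h)
  have hz0 : Tendsto z L (𝓝 0) :=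
    (tendsto_zero_iff_abs_tendsto_zero z).2 (tendsto_nhds_of_tendsto_nhdsWithin hz)
  have h1γ : Tendsto (fun t => 1 + γ t / z t) L (𝓝 1) := by simpa using hγ.const_add 1
  have hzγ : Tendsto (fun t => z t + γ t) L (𝓝[≠] 0) := by
    refine tendsto_nhdsWithin_iff.2 ⟨?_, ?_⟩
    · simpa using (hz0.mul h1γ).congr' (hzne.mono fun t ht => by field_simp)
    · filter_upwards [hzne, h1γ.eventually (lt_mem_nhds one_pos)] with t hzt h1
      rw [show z t + γ t = z t * (1 + γ t / z t) by field_simp]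
      exact mul_ne_zero hzt h1.ne'
  have hratio : Tendsto (fun t => φ (SignType.sign (z t) * (z t + γ t)) / φ |z t|) L (𝓝 1) := by
    refine tendsto_apply_div_apply_of_regularlyVarying hφpos hφmono hrv hz (h1γ.congr' ?_)
    filter_upwards [hzne] with t hzt
    have hsign : (SignType.sign (z t) : ℝ) ≠ 0 :=
      left_ne_zero_of_mul (by rw [sign_mul_self]; exact abs_ne_zero.2 hzt)
    rw [← sign_mul_self, mul_div_mul_left _ _ hsign]
    field_simp
  have hfne : ∀ᶠ t in L, f |z t| ≠ 0 := by
    filter_upwards [(hasym.comp habs).eventually (lt_mem_nhds one_pos)] with t ht h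
    simp [h] at ht
  simpa using ((hasym.comp hzγ).mul (hratio.mul ((hasym.comp habs).inv₀ one_ne_zero))).congr' <| by
    filter_upwards [hzne, hzγ.eventually eventually_mem_nhdsWithin, hfne] with t hzt hzγt hft
    rw [Function.comp_apply, Function.comp_apply, apply_sign_mul hφodd hzt, inv_div]
    field_simp [hφne _ hzγt, hφne _ (abs_pos.2 hzt).ne']

end RegularVariation

section IntegralOneDiv

variable {f φ : ℝ → ℝ} {c K : ℝ}

theorem intervalIntegrable_one_div (hf : Continuous f) (hfpos : ∀ u ∈ Ioc 0 c, 0 < f u)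
    {x y : ℝ} (hx : 0 < x) (hxy : x ≤ y) (hy : y ≤ c) :
    IntervalIntegrable (fun u => 1 / f u) volume x y :=
  (continuousOn_const.div hf.continuousOn fun u hu => by
    rw [uIcc_of_le hxy] at hu
    exact (hfpos u ⟨hx.trans_le hu.1, hu.2.trans hy⟩).ne').intervalIntegrable

theorem integral_one_div_sub_integral (hf : Continuous f) (hfpos : ∀ u ∈ Ioc 0 c, 0 < f u)
    {x y : ℝ} (hx : 0 < x) (hxy : x ≤ y) (hy : y ≤ c) :
    (∫ u in x..c, 1 / f u) - ∫ u in y..c, 1 / f u = ∫ u in x..y, 1 / f u := by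
  rw [← intervalIntegral.integral_add_adjacent_intervals
    (intervalIntegrable_one_div hf hfpos hx hxy hy)
    (intervalIntegrable_one_div hf hfpos (hx.trans_le hxy) hy le_rfl)]
  ring

theorem antitoneOn_integral_one_div (hf : Continuous f) (hfpos : ∀ u ∈ Ioc 0 c, 0 < f u) :
    AntitoneOn (fun x => ∫ u in x..c, 1 / f u) (Ioc 0 c) := fun x hx y hy hxy => by
  have hsub := integral_one_div_sub_integral hf hfpos hx.1 hxy hy.2
  have : 0 ≤ ∫ u in x..y, 1 / f u := intervalIntegral.integral_nonneg hxy fun u hu =>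
    (one_div_pos.2 (hfpos u ⟨hx.1.trans_le hu.1, hu.2.trans hy.2⟩)).le
  simp only
  linarith

theorem hasDerivAt_integral_one_div (hf : Continuous f) (hfpos : ∀ u ∈ Ioc 0 c, 0 < f u)
    {x : ℝ} (hx : x ∈ Ioo 0 c) :
    HasDerivAt (fun x => ∫ u in x..c, 1 / f u) (-(1 / f x)) x :=
  intervalIntegral.integral_hasDerivAt_left
    (intervalIntegrable_one_div hf hfpos hx.1 hx.2.le le_rfl)
    (hf.measurable.const_div 1).stronglyMeasurable.stronglyMeasurableAtFilter
    (continuousAt_const.div hf.continuousAt (hfpos x ⟨hx.1, hx.2.le⟩).ne')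

theorem integral_one_div_le (hf : Continuous f) (hfpos : ∀ u ∈ Ioc 0 c, 0 < f u)
    (hφpos : ∀ y ∈ Ioc 0 c, 0 < φ y) (hφmono : MonotoneOn φ (Ioc 0 c))
    (hφf : ∀ y ∈ Ioc 0 c, φ y ≤ K * f y) {x y : ℝ} (hx : 0 < x) (hxy : x ≤ y) (hy : y ≤ c) :
    ∫ u in x..y, 1 / f u ≤ K * (y - x) / φ x := by
  have hxc : x ∈ Ioc 0 c := ⟨hx, hxy.trans hy⟩
  calc ∫ u in x..y, 1 / f u ≤ ∫ _ in x..y, K / φ x :=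
        intervalIntegral.integral_mono_on hxy (intervalIntegrable_one_div hf hfpos hx hxy hy)
          intervalIntegrable_const fun u hu => by
            have hu' : u ∈ Ioc 0 c := ⟨hx.trans_le hu.1, hu.2.trans hy⟩
            rw [div_le_div_iff₀ (hfpos u hu') (hφpos x hxc)]
            linarith [hφmono hxc hu' hu.1, hφf u hu']
    _ = K * (y - x) / φ x := by rw [intervalIntegral.integral_const, smul_eq_mul]; ring

theorem le_integral_one_div (hf : Continuous f) (hK : 0 < K) (hfpos : ∀ u ∈ Ioc 0 c, 0 < f u)
    (hφpos : ∀ y ∈ Ioc 0 c, 0 < φ y) (hφmono : MonotoneOn φ (Ioc 0 c))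
    (hfφ : ∀ y ∈ Ioc 0 c, f y ≤ K * φ y) {x y : ℝ} (hx : 0 < x) (hxy : x ≤ y) (hy : y ≤ c) :
    (y - x) / (K * φ y) ≤ ∫ u in x..y, 1 / f u := by
  have hyc : y ∈ Ioc 0 c := ⟨hx.trans_le hxy, hy⟩
  calc (y - x) / (K * φ y) = ∫ _ in x..y, 1 / (K * φ y) := by
        rw [intervalIntegral.integral_const, smul_eq_mul]; ring
    _ ≤ ∫ u in x..y, 1 / f u := intervalIntegral.integral_mono_on hxy intervalIntegrable_const
        (intervalIntegrable_one_div hf hfpos hx hxy hy) fun u hu => by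
          have hu' : u ∈ Ioc 0 c := ⟨hx.trans_le hu.1, hu.2.trans hy⟩
          rw [div_le_div_iff₀ (mul_pos hK (hφpos y hyc)) (hfpos u hu')]
          linarith [hfφ u hu', mul_le_mul_of_nonneg_left (hφmono hu' hyc hu.2) hK.le]

theorem integral_one_div_le_of_doubling {ρ : ℝ} (hf : Continuous f) (hK : 0 < K) (hρ : 2 < ρ)
    (hφpos : ∀ y ∈ Ioc 0 c, 0 < φ y) (hφmono : MonotoneOn φ (Ioc 0 c))
    (hφf : ∀ y ∈ Ioc 0 c, φ y ≤ K * f y)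
    (hdouble : ∀ y ∈ Ioc 0 (c / 2), ρ * φ y ≤ φ (2 * y)) {x : ℝ} (hx : x ∈ Ioc 0 c) :
    ∫ u in x..c, 1 / f u ≤ K * ρ / (ρ - 2) * (x / φ x) := by
  have hfpos : ∀ u ∈ Ioc 0 c, 0 < f u := fun u hu =>
    pos_of_mul_pos_right ((hφpos u hu).trans_le (hφf u hu)) hK.le
  have hbase : ∀ x ∈ Ioc 0 c, c ≤ 2 * x →
      ∫ u in x..c, 1 / f u ≤ K * ρ / (ρ - 2) * (x / φ x) := by
    intro x hx h2x
    have hφx := hφpos x hx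
    have hA : 1 ≤ ρ / (ρ - 2) := by rw [le_div_iff₀ (by linarith)]; linarith
    calc _ ≤ K * (c - x) / φ x := integral_one_div_le hf hfpos hφpos hφmono hφf hx.1 hx.2 le_rfl
      _ ≤ 1 * (K * (x / φ x)) := by rw [one_mul, mul_div_assoc]; gcongr; linarith
      _ ≤ ρ / (ρ - 2) * (K * (x / φ x)) := by gcongr; exact mul_nonneg hK.le (by positivity [hx.1])
      _ = _ := by ring
  suffices ∀ n : ℕ, ∀ x ∈ Ioc 0 c, c ≤ 2 ^ n * x →
      ∫ u in x..c, 1 / f u ≤ K * ρ / (ρ - 2) * (x / φ x) by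
    obtain ⟨n, hn⟩ := pow_unbounded_of_one_lt (c / x) one_lt_two
    exact this n x hx ((div_lt_iff₀ hx.1).1 hn).le
  intro n
  induction n with
  | zero => exact fun x hx hcx => hbase x hx (by linarith [hx.1])
  | succ n ih =>
    intro x hx hcx
    rcases le_or_gt c (2 * x) with h2x | h2x
    · exact hbase x hx h2x
    have hx2 : 2 * x ∈ Ioc 0 c := ⟨by linarith [hx.1], h2x.le⟩
    have hφx := hφpos x hx
    -- over the dyadic intervals `[2 ^ k * x, 2 ^ (k + 1) * x]` the bounds form a geometric series
    -- of ratio `2 / ρ`, whence the constant `ρ / (ρ - 2) = 1 / (1 - 2 / ρ)`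
    have hratio : 2 * x / φ (2 * x) ≤ 2 / ρ * (x / φ x) := calc
      _ ≤ 2 * x / (ρ * φ x) := div_le_div_of_nonneg_left (by linarith [hx.1]) (by positivity)
          (hdouble x ⟨hx.1, by linarith⟩)
      _ = _ := by field_simp
    calc ∫ u in x..c, 1 / f u = (∫ u in x..2 * x, 1 / f u) + ∫ u in 2 * x..c, 1 / f u := by
          linarith [integral_one_div_sub_integral hf hfpos hx.1 (by linarith [hx.1]) h2x.le]
      _ ≤ K * (2 * x - x) / φ x + K * ρ / (ρ - 2) * (2 / ρ * (x / φ x)) := by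
          gcongr
          · exact integral_one_div_le hf hfpos hφpos hφmono hφf hx.1 (by linarith [hx.1]) h2x.le
          · exact (ih _ hx2 (by rw [pow_succ] at hcx; linarith)).trans (by gcongr)
      _ = K * ρ / (ρ - 2) * (x / φ x) := by
          have : ρ - 2 ≠ 0 := by linarith
          field_simp
          ring

theorem exists_mul_integral_one_div_le_sub {ρ β d : ℝ} (hf : Continuous f) (hc : 0 < c)
    (hK : 0 < K) (hρ : 2 < ρ) (hd : 0 < d) (hφpos : ∀ y, 0 < y → 0 < φ y)
    (hφmono : MonotoneOn φ (Ioi 0))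
    (hrv : Tendsto (fun y => φ ((1 + d) * y) / φ y) (𝓝[>] 0) (𝓝 ((1 + d) ^ β)))
    (hfφ : ∀ y ∈ Ioc 0 c, φ y ≤ K * f y ∧ f y ≤ K * φ y)
    (hdouble : ∀ y ∈ Ioc 0 (c / 2), ρ * φ y ≤ φ (2 * y)) :
    ∃ κ > 0, ∀ᶠ x in 𝓝[>] 0,
      κ * ∫ u in x..c, 1 / f u ≤ (∫ u in x..c, 1 / f u) - ∫ u in (1 + d) * x..c, 1 / f u := by
  have hfpos : ∀ u ∈ Ioc 0 c, 0 < f u := fun u hu =>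
    pos_of_mul_pos_right ((hφpos u hu.1).trans_le (hfφ u hu).1) hK.le
  have hφmono' : MonotoneOn φ (Ioc 0 c) := hφmono.mono Ioc_subset_Ioi_self
  have hR : 0 < (1 + d) ^ β := rpow_pos_of_pos (by linarith) β
  set C := K * ρ / (ρ - 2)
  have hC : 0 < C := div_pos (by positivity) (by linarith)
  refine ⟨d / (K * (2 * (1 + d) ^ β) * C), by positivity, ?_⟩
  filter_upwards [hrv.eventually (gt_mem_nhds (by linarith : (1 + d) ^ β < 2 * (1 + d) ^ β)),
    Ioo_mem_nhdsGT (div_pos hc (by linarith : (0 : ℝ) < 1 + d))] with x hrat ⟨hx0, hxc⟩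
  have hdx : x ≤ (1 + d) * x := by nlinarith
  have hdxc : (1 + d) * x ≤ c := ((lt_div_iff₀' (by linarith)).1 hxc).le
  have hφx := hφpos x hx0
  rw [integral_one_div_sub_integral hf hfpos hx0 hdx hdxc]
  rw [div_lt_iff₀ hφx] at hrat
  calc d / (K * (2 * (1 + d) ^ β) * C) * ∫ u in x..c, 1 / f u
      ≤ d / (K * (2 * (1 + d) ^ β) * C) * (C * (x / φ x)) := by
        gcongr
        exact integral_one_div_le_of_doubling hf hK hρ (fun y hy => hφpos y hy.1) hφmono'
          (fun y hy => (hfφ y hy).1) hdouble ⟨hx0, hdx.trans hdxc⟩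
    _ = ((1 + d) * x - x) / (K * (2 * (1 + d) ^ β * φ x)) := by field_simp; ring
    _ ≤ ((1 + d) * x - x) / (K * φ ((1 + d) * x)) := by
        gcongr
        exact mul_pos hK (hφpos _ (hx0.trans_le hdx))
    _ ≤ _ := le_integral_one_div hf hK hfpos (fun y hy => hφpos y hy.1) hφmono'
        (fun y hy => (hfφ y hy).2) hx0 hdx hdxc

theorem tendsto_div_of_isEquivalent_integral_one_div {α : Type*} {L : Filter α} {a b : α → ℝ}
    {ρ β : ℝ} (hf : Continuous f) (hc : 0 < c) (hK : 0 < K) (hρ : 2 < ρ)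
    (hφpos : ∀ y, 0 < y → 0 < φ y) (hφmono : MonotoneOn φ (Ioi 0))
    (hrv : ∀ l : ℝ, 0 < l → Tendsto (fun y => φ (l * y) / φ y) (𝓝[>] 0) (𝓝 (l ^ β)))
    (hfφ : ∀ y ∈ Ioc 0 c, φ y ≤ K * f y ∧ f y ≤ K * φ y)
    (hdouble : ∀ y ∈ Ioc 0 (c / 2), ρ * φ y ≤ φ (2 * y))
    (ha : Tendsto a L (𝓝[>] 0)) (hb : Tendsto b L (𝓝[>] 0))
    (hGb : ∀ᶠ t in L, 0 < ∫ u in b t..c, 1 / f u)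
    (hab : (fun t => ∫ u in a t..c, 1 / f u) ~[L] fun t => ∫ u in b t..c, 1 / f u) :
    Tendsto (fun t => a t / b t) L (𝓝 1) :=
  tendsto_div_of_isEquivalent_comp hc ((antitoneOn_integral_one_div hf fun u hu =>
      pos_of_mul_pos_right ((hφpos u hu.1).trans_le (hfφ u hu).1) hK.le).mono Ioo_subset_Ioc_self)
    (fun d hd => exists_mul_integral_one_div_le_sub hf hc hK hρ hd hφpos hφmono
      (hrv _ (by linarith)) hfφ hdouble) ha hb hGb hab

theorem isEquivalent_integral_one_div_of_integral_eq {b : ℝ → ℝ} (hf : Continuous f)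
    (hfpos : ∀ u ∈ Ioc 0 c, 0 < f u) (hc1 : IntervalIntegrable (fun u => 1 / f u) volume c 1)
    (hb : ∀ᶠ t in atTop, b t ∈ Ioc 0 c) (hF : ∀ᶠ t in atTop, ∫ u in b t..1, 1 / f u = t) :
    (fun t => ∫ u in b t..c, 1 / f u) ~[atTop] id := by
  refine (IsEquivalent.refl.sub_isLittleO (isLittleO_const_id_atTop (∫ u in c..1, 1 / f u))
    ).congr_left ?_
  filter_upwards [hF, hb] with t ht hbt
  have hsplit := intervalIntegral.integral_add_adjacent_intervals
    (intervalIntegrable_one_div hf hfpos hbt.1 hbt.2 le_rfl) hc1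
  rw [ht] at hsplit
  simp only [Pi.sub_apply, id]
  linarith

theorem isEquivalent_integral_one_div_abs {γ z : ℝ → ℝ} {β : ℝ} (hf : Continuous f)
    (hc : 0 < c) (hfpos : ∀ u ∈ Ioc 0 c, 0 < f u) (hφodd : ∀ y, φ (-y) = -φ y)
    (hφpos : ∀ y, 0 < y → 0 < φ y) (hφmono : MonotoneOn φ (Ioi 0))
    (hrv : ∀ l : ℝ, 0 < l → Tendsto (fun y => φ (l * y) / φ y) (𝓝[>] 0) (𝓝 (l ^ β)))
    (hasym : Tendsto (fun y => f y / φ y) (𝓝[≠] 0) (𝓝 1))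
    (hz : ∀ᶠ t in atTop, HasDerivAt z (-f (z t + γ t)) t)
    (hz0 : Tendsto (fun t => |z t|) atTop (𝓝[>] 0))
    (hγ : Tendsto (fun t => γ t / z t) atTop (𝓝 0)) :
    (fun t => ∫ u in |z t|..c, 1 / f u) ~[atTop] id := by
  refine isEquivalent_id_of_hasDerivAt ?_
    (tendsto_sign_mul_div_of_asymptotic hφodd hφpos hφmono hrv hasym hz0 hγ)
  filter_upwards [hz, hz0.eventually (Ioo_mem_nhdsGT hc)] with t hzt hat
  refine ((hasDerivAt_integral_one_div hf hfpos hat).comp t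
    ((hasDerivAt_abs (abs_pos.1 hat.1)).comp t hzt)).congr_deriv ?_
  ring

end IntegralOneDiv

theorem stmt19_general (f φ γ z Finv : ℝ → ℝ) (β T M T₀ : ℝ) (hβ : 1 < β)
    (hfc : Continuous f)
    (hφodd : ∀ y, φ (-y) = -φ y) (hφmono : StrictMono φ)
    (hφrv : ∀ l : ℝ, 0 < l →
      Tendsto (fun y => φ (l * y) / φ y) (𝓝[>] 0) (𝓝 (l ^ β)))
    (hasym : Tendsto (fun y => f y / φ y) (𝓝[≠] 0) (𝓝 1))
    (hFinv_pos : ∀ᶠ t in atTop, 0 < Finv t)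
    (hFinv : ∀ᶠ t in atTop, (∫ u in Finv t..1, 1 / f u) = t)
    (hFinv0 : Tendsto Finv atTop (𝓝 0))
    (hz : ∀ t ≥ T, HasDerivAt z (-f (z t + γ t)) t)
    (hz0 : Tendsto z atTop (𝓝 0))
    (hM : 0 < M) (hlow : ∀ t ≥ T₀, (M / 2) * Finv t < |z t|)
    (hγF : Tendsto (fun t => γ t / Finv t) atTop (𝓝 0)) :
    Tendsto (fun t => |z t| / Finv t) atTop (𝓝 1) ∧
    (liminf (fun t => |z t| / Finv t) atTop = 0 ∨
     liminf (fun t => |z t| / Finv t) atTop = 1) := by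
  have hφ0 : φ 0 = 0 := by linarith [neg_zero (G := ℝ) ▸ hφodd 0]
  have hφpos : ∀ y, 0 < y → 0 < φ y := fun y hy => hφ0 ▸ hφmono hy
  have hφmono' : MonotoneOn φ (Ioi 0) := hφmono.monotone.monotoneOn _
  obtain ⟨ρ, hρ, hdouble⟩ := exists_two_lt_doubling hβ hφpos (hφrv 2 two_pos)
  obtain ⟨δ, hδ, hnear⟩ := mem_nhdsGT_iff_exists_Ioo_subset.1
    ((eventually_le_two_mul_of_tendsto_div hφpos hasym).and hdouble)
  -- `c = Finv t₁`; since `t₁ ≠ 0` is not the junk value of a non-integrable integral, `1 / f` is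
  -- integrable on `[c, 1]`
  obtain ⟨t₁, hc, hcδ, hFc, ht₁⟩ := (hFinv_pos.and ((hFinv0.eventually_lt_const hδ).and
    (hFinv.and (eventually_ne_atTop 0)))).exists
  have hfφ : ∀ y ∈ Ioc 0 (Finv t₁), φ y ≤ 2 * f y ∧ f y ≤ 2 * φ y := fun y hy =>
    (hnear ⟨hy.1, hy.2.trans_lt hcδ⟩).1
  have hfpos : ∀ y ∈ Ioc 0 (Finv t₁), 0 < f y := fun y hy => by linarith [hφpos y hy.1, hfφ y hy]
  have hzF : ∀ᶠ t in atTop, M / 2 * Finv t ≤ |z t| := (eventually_ge_atTop T₀).mono fun t ht =>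
    (hlow t ht).le
  have ha : Tendsto (fun t => |z t|) atTop (𝓝[>] 0) := by
    refine tendsto_nhdsWithin_iff.2 ⟨by simpa using hz0.abs, ?_⟩
    filter_upwards [hFinv_pos, hzF] with t hF hzt using (mul_pos (half_pos hM) hF).trans_le hzt
  have hGa := isEquivalent_integral_one_div_abs hfc hc hfpos hφodd hφpos hφmono' hφrv hasym
    ((eventually_ge_atTop T).mono hz) ha (tendsto_div_of_mul_le_abs (half_pos hM) hFinv_pos hzF hγF)
  have hGb := isEquivalent_integral_one_div_of_integral_eq hfc hfpos
    (intervalIntegral.intervalIntegrable_of_integral_ne_zero (by rwa [hFc]))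
    (hFinv_pos.and ((hFinv0.eventually_lt_const hc).mono fun _ h => h.le)) hFinv
  have h := tendsto_div_of_isEquivalent_integral_one_div hfc hc two_pos hρ hφpos hφmono' hφrv hfφ
    (fun y hy => (hnear ⟨hy.1, by linarith [hy.2]⟩).2) ha
    (tendsto_nhdsWithin_iff.2 ⟨hFinv0, hFinv_pos⟩)
    ((hGb.symm.tendsto_atTop tendsto_id).eventually_gt_atTop 0) (hGa.trans hGb.symm)
  exact ⟨h, Or.inr h.liminf_eq⟩

/-- If `z' = -f(z + γ)` on `[T,∞)`, `z(t) → 0`, `f` is asymptotic at 0 to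
an increasing odd `C¹` function `φ ∈ RV₀(β)` with `β > 1`, `γ(t)/F⁻¹(t) → 0`, and
`|z(t)| > (M/2) F⁻¹(t)` eventually for some `M > 0`, then `|z(t)|/F⁻¹(t) → 1`; in
particular the liminf of `|z(t)|/F⁻¹(t)` can only be `0` or `1`. -/
theorem stmt19 (f φ γ z Finv : ℝ → ℝ) (β T M T₀ : ℝ) (hβ : 1 < β)
    (hfc : Continuous f)
    (hφodd : ∀ y, φ (-y) = -φ y) (hφmono : StrictMono φ) (hφC1 : ContDiff ℝ 1 φ)
    (hφrv : ∀ l : ℝ, 0 < l →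
      Tendsto (fun y => φ (l * y) / φ y) (𝓝[>] 0) (𝓝 (l ^ β)))
    (hasym : Tendsto (fun y => f y / φ y) (𝓝[≠] 0) (𝓝 1))
    (hγ : Continuous γ)
    (hFinv_pos : ∀ᶠ t in atTop, 0 < Finv t)
    (hFinv : ∀ᶠ t in atTop, (∫ u in Finv t..1, 1 / f u) = t)
    (hFinv0 : Tendsto Finv atTop (𝓝 0))
    (hz : ∀ t ≥ T, HasDerivAt z (-f (z t + γ t)) t)
    (hz0 : Tendsto z atTop (𝓝 0))
    (hM : 0 < M) (hlow : ∀ t ≥ T₀, (M / 2) * Finv t < |z t|)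
    (hγF : Tendsto (fun t => γ t / Finv t) atTop (𝓝 0)) :
    Tendsto (fun t => |z t| / Finv t) atTop (𝓝 1) ∧
    (liminf (fun t => |z t| / Finv t) atTop = 0 ∨
     liminf (fun t => |z t| / Finv t) atTop = 1) :=
  stmt19_general f φ γ z Finv β T M T₀ hβ hfc hφodd hφmono hφrv hasym hFinv_pos hFinv hFinv0 hz hz0
    hM hlow hγF
end
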